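/- Let w : ℝ → ℝ³ be twice differentiable with a := w′, b := w″, w(t) ≠ 0 and 𝛘_a(t) ≠ 0 for all t, where ŵ := w/|w|, α_a := (ŵ·a)/|w|, 𝛘_a := (ŵ×a)/|w|, 𝛘̂_a := 𝛘_a/|𝛘_a|, and 𝛘_b := (ŵ×b)/|w|. Then, with d_b := −(𝛘̂_a·𝛘_b), the magnitude |𝛘_a| is differentiable and satisfies d|𝛘_a|/dt = −2α_a |𝛘_a| − d_b. -/

import Mathlib

open Matrix

/-- Euclidean magnitude of a vector in ℝ³. -/
noncomputable def mag (v : Fin 3 → ℝ) : ℝ := Real.sqrt (v ⬝ᵥ v)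

/-- The unit tangent vector `ŵ := w/|w|` of a curve `w : ℝ → ℝ³`. -/
noncomputable def uhat (w : ℝ → Fin 3 → ℝ) (t : ℝ) : Fin 3 → ℝ := (mag (w t))⁻¹ • w t

/-- The growth rate `α_a := (ŵ·a)/|w|`, where `a := w′`. -/
noncomputable def alphaA (w : ℝ → Fin 3 → ℝ) (t : ℝ) : ℝ :=
  (uhat w t ⬝ᵥ deriv w t) / mag (w t)

/-- The swing rate `𝛘_a := (ŵ×a)/|w|`, where `a := w′`. -/
noncomputable def chiA (w : ℝ → Fin 3 → ℝ) (t : ℝ) : Fin 3 → ℝ :=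
  (mag (w t))⁻¹ • (uhat w t ⨯₃ deriv w t)

/-- `α_b := (ŵ·b)/|w|`, where `b := w″`. -/
noncomputable def alphaB (w : ℝ → Fin 3 → ℝ) (t : ℝ) : ℝ :=
  (uhat w t ⬝ᵥ deriv (deriv w) t) / mag (w t)

/-- `𝛘_b := (ŵ×b)/|w|`, where `b := w″`. -/
noncomputable def chiB (w : ℝ → Fin 3 → ℝ) (t : ℝ) : Fin 3 → ℝ :=
  (mag (w t))⁻¹ • (uhat w t ⨯₃ deriv (deriv w) t)

/-- The unit vector `𝛘̂_a := 𝛘_a/|𝛘_a|`. -/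
noncomputable def chiAhat (w : ℝ → Fin 3 → ℝ) (t : ℝ) : Fin 3 → ℝ :=
  (mag (chiA w t))⁻¹ • chiA w t

/-- The scalar `c_b := ŵ·(𝛘̂_a×𝛘_b)`. -/
noncomputable def cB (w : ℝ → Fin 3 → ℝ) (t : ℝ) : ℝ :=
  uhat w t ⬝ᵥ (chiAhat w t ⨯₃ chiB w t)

/-- The scalar `d_b := −(𝛘̂_a·𝛘_b)`. -/
noncomputable def dB (w : ℝ → Fin 3 → ℝ) (t : ℝ) : ℝ :=
  -(chiAhat w t ⬝ᵥ chiB w t)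

/-- The Darboux angular velocity vector `𝒟 := 𝛘_a + (c_b/|𝛘_a|) ŵ`. -/
noncomputable def darboux (w : ℝ → Fin 3 → ℝ) (t : ℝ) : Fin 3 → ℝ :=
  chiA w t + (cB w t / mag (chiA w t)) • uhat w t

/-! With `n := w·w` and `u := w × a` one has `𝛘_a = u/n`, hence `|𝛘_a| = |u|/n`, and `u′ = w × b`
because `a × a = 0`. The quotient rule, with `|u|′ = (u·u′)/|u|` and `n′ = 2 w·a`, gives
`d|𝛘_a|/dt = (u·(w × b))/(|u| n) − 2 (w·a)/n · |u|/n`, whose two terms are `−d_b` and `−2α_a|𝛘_a|`. -/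

theorem LinearMap.hasDerivAt_of_bilinear {𝕜 E F G : Type*} [NontriviallyNormedField 𝕜]
    [CompleteSpace 𝕜] [NormedAddCommGroup E] [NormedSpace 𝕜 E] [FiniteDimensional 𝕜 E]
    [NormedAddCommGroup F] [NormedSpace 𝕜 F] [FiniteDimensional 𝕜 F]
    [NormedAddCommGroup G] [NormedSpace 𝕜 G]
    (B : E →ₗ[𝕜] F →ₗ[𝕜] G) {u : 𝕜 → E} {v : 𝕜 → F} {u' : E} {v' : F} {x : 𝕜}
    (hu : HasDerivAt u u' x) (hv : HasDerivAt v v' x) :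
    HasDerivAt (fun y => B (u y) (v y)) (B (u x) v' + B u' (v x)) x :=
  B.toContinuousBilinearMap.hasDerivAt_of_bilinear (fun _ => hu) (fun _ => hv)

section Products

variable {𝕜 : Type*} [NontriviallyNormedField 𝕜] [CompleteSpace 𝕜] {x : 𝕜}

theorem HasDerivAt.dotProduct {ι : Type*} [Fintype ι] {u v : 𝕜 → ι → 𝕜} {u' v' : ι → 𝕜}
    (hu : HasDerivAt u u' x) (hv : HasDerivAt v v' x) :
    HasDerivAt (fun y => u y ⬝ᵥ v y) (u x ⬝ᵥ v' + u' ⬝ᵥ v x) x :=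
  (dotProductBilin 𝕜 𝕜).hasDerivAt_of_bilinear hu hv

theorem HasDerivAt.dotProduct_self {ι : Type*} [Fintype ι] {u : 𝕜 → ι → 𝕜} {u' : ι → 𝕜}
    (hu : HasDerivAt u u' x) :
    HasDerivAt (fun y => u y ⬝ᵥ u y) (2 * (u x ⬝ᵥ u')) x := by
  convert hu.dotProduct hu using 1
  rw [dotProduct_comm u', two_mul]

theorem HasDerivAt.crossProduct {u v : 𝕜 → Fin 3 → 𝕜} {u' v' : Fin 3 → 𝕜}
    (hu : HasDerivAt u u' x) (hv : HasDerivAt v v' x) :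
    HasDerivAt (fun y => u y ⨯₃ v y) (u x ⨯₃ v' + u' ⨯₃ v x) x :=
  _root_.crossProduct.hasDerivAt_of_bilinear hu hv

end Products

theorem mag_mul_self (v : Fin 3 → ℝ) : mag v * mag v = v ⬝ᵥ v :=
  Real.mul_self_sqrt (dotProduct_star_self_nonneg v)

theorem mag_pos {v : Fin 3 → ℝ} (hv : v ≠ 0) : 0 < mag v :=
  Real.sqrt_pos.2 <| (dotProduct_star_self_nonneg v).lt_of_ne
    (Ne.symm (dotProduct_self_eq_zero.not.2 hv))

theorem mag_smul (c : ℝ) (v : Fin 3 → ℝ) : mag (c • v) = |c| * mag v := by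
  rw [mag, smul_dotProduct, dotProduct_smul, smul_eq_mul, smul_eq_mul, ← mul_assoc,
    Real.sqrt_mul (mul_self_nonneg c), Real.sqrt_mul_self_eq_abs, mag]

theorem HasDerivAt.mag {f : ℝ → Fin 3 → ℝ} {f' : Fin 3 → ℝ} {x : ℝ} (hf : HasDerivAt f f' x)
    (hx : f x ≠ 0) : HasDerivAt (fun y => mag (f y)) ((f x ⬝ᵥ f') / mag (f x)) x :=
  (hf.dotProduct_self.sqrt (dotProduct_self_eq_zero.not.2 hx)).congr_deriv
    (mul_div_mul_left _ _ (two_ne_zero' ℝ))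

section Curve

variable {w : ℝ → Fin 3 → ℝ} {t : ℝ}

theorem inv_mag_smul_uhat_cross (v : Fin 3 → ℝ) :
    (mag (w t))⁻¹ • (uhat w t ⨯₃ v) = (w t ⬝ᵥ w t)⁻¹ • (w t ⨯₃ v) := by
  rw [uhat, LinearMap.map_smul₂, smul_smul, ← mul_inv, mag_mul_self]

theorem chiA_eq : chiA w t = (w t ⬝ᵥ w t)⁻¹ • (w t ⨯₃ deriv w t) :=
  inv_mag_smul_uhat_cross _

theorem chiB_eq : chiB w t = (w t ⬝ᵥ w t)⁻¹ • (w t ⨯₃ deriv (deriv w) t) :=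
  inv_mag_smul_uhat_cross _

theorem alphaA_eq : alphaA w t = (w t ⬝ᵥ deriv w t) / (w t ⬝ᵥ w t) := by
  rw [alphaA, uhat, smul_dotProduct, smul_eq_mul, inv_mul_eq_div, div_div, mag_mul_self]

theorem mag_chiA : mag (chiA w t) = mag (w t ⨯₃ deriv w t) / (w t ⬝ᵥ w t) := by
  have hn : 0 ≤ w t ⬝ᵥ w t := dotProduct_star_self_nonneg (w t)
  rw [chiA_eq, mag_smul, abs_of_nonneg (inv_nonneg.2 hn), inv_mul_eq_div]

theorem chiAhat_eq (hw : w t ≠ 0) :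
    chiAhat w t = (mag (w t ⨯₃ deriv w t))⁻¹ • (w t ⨯₃ deriv w t) := by
  have hn : w t ⬝ᵥ w t ≠ 0 := dotProduct_self_eq_zero.not.2 hw
  rw [chiAhat, mag_chiA, chiA_eq, smul_smul, inv_div, div_mul_eq_mul_div, mul_inv_cancel₀ hn,
    one_div]

theorem dB_eq (hw : w t ≠ 0) :
    dB w t = -((w t ⨯₃ deriv w t) ⬝ᵥ (w t ⨯₃ deriv (deriv w) t)) /
      (mag (w t ⨯₃ deriv w t) * (w t ⬝ᵥ w t)) := by
  rw [dB, chiAhat_eq hw, chiB_eq, smul_dotProduct, dotProduct_smul, smul_eq_mul, smul_eq_mul,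
    neg_div, ← inv_mul_eq_div, mul_inv]
  ring

end Curve

/-- For a twice differentiable curve `w : ℝ → ℝ³` with `w(t) ≠ 0` and `𝛘_a(t) ≠ 0`,
the magnitude of the swing rate satisfies `d|𝛘_a|/dt = −2α_a |𝛘_a| − d_b`. -/
theorem deriv_mag_chiA (w : ℝ → Fin 3 → ℝ)
    (hd : Differentiable ℝ w) (hd' : Differentiable ℝ (deriv w))
    (hw : ∀ t, w t ≠ 0) (hchi : ∀ t, chiA w t ≠ 0) (t : ℝ) :
    HasDerivAt (fun s => mag (chiA w s))
      (-2 * alphaA w t * mag (chiA w t) - dB w t) t := by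
  have hcross : HasDerivAt (fun s => w s ⨯₃ deriv w s) (w t ⨯₃ deriv (deriv w) t) t := by
    simpa [cross_self] using (hd t).hasDerivAt.crossProduct (hd' t).hasDerivAt
  have hcross_ne : w t ⨯₃ deriv w t ≠ 0 := fun h => hchi t (by rw [chiA_eq, h, smul_zero])
  have hn : w t ⬝ᵥ w t ≠ 0 := dotProduct_self_eq_zero.not.2 (hw t)
  simp only [mag_chiA]
  refine ((hcross.mag hcross_ne).fun_div (hd t).hasDerivAt.dotProduct_self hn).congr_deriv ?_
  rw [alphaA_eq, dB_eq (hw t)]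
  have := (mag_pos hcross_ne).ne'
  field_simp
  ring
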